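/- Let (T, [···]) be a null symplectic triple system over a field of characteristic ≠ 2, 3. Then d_{x,x}² = 0 for every x ∈ T, and consequently d_{x,x}d_{y,y} + d_{y,y}d_{x,x} + 4d_{x,y}² = 0 for all x,y ∈ T. -/

import Mathlib

/-!
Applying the derivation `d_{x,x}` to `[x x w]` gives `2 [[x x x] x w] = 0`, so `d_{[xxx],x} = 0`.
Applying `d_{x,z}` to `[x x x]` then kills the left side, while by full symmetry each of the
three terms on the right equals `d_{x,x}² z`; hence `3 d_{x,x}² = 0`. The second identity is the
polarization of `d_{u,u}² = 0`: expanding `d_{x+y,x+y}² + d_{x-y,x-y}²` leaves twice the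
claimed expression.
-/

/-- A null symplectic triple system: a trilinear product which is symmetric in its
arguments and such that the maps `d_{x,y} = [xy·]` are derivations of the product. -/
def IsNullSTS (k : Type*) {T : Type*} [Field k] [AddCommGroup T] [Module k T]
    (tp : T →ₗ[k] T →ₗ[k] T →ₗ[k] T) : Prop :=
  (∀ x y z : T, tp x y z = tp y x z) ∧
  (∀ x y z : T, tp x y z = tp x z y) ∧
  (∀ x y u v w : T, tp x y (tp u v w) =
      tp (tp x y u) v w + tp u (tp x y v) w + tp u v (tp x y w))

namespace LinearMap

theorem polarize_comp_self {R M : Type*} [CommRing R] [AddCommGroup M] [Module R M]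
    {D : M →ₗ[R] M →ₗ[R] Module.End R M} (hD : ∀ x y, D y x = D x y) (x y : M) :
    D (x + y) (x + y) ∘ₗ D (x + y) (x + y) + D (x - y) (x - y) ∘ₗ D (x - y) (x - y) =
      (2 : R) • (D x x ∘ₗ D x x + D y y ∘ₗ D y y +
        (D x x ∘ₗ D y y + D y y ∘ₗ D x x + (4 : R) • (D x y ∘ₗ D x y))) := by
  simp only [map_add, map_sub, add_apply, sub_apply, hD y x,
    add_comp, comp_add, sub_comp, comp_sub]
  module

theorem anticomm_add_four_smul_comp_self_eq_zero {k M : Type*} [Field k] [AddCommGroup M]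
    [Module k M] {D : M →ₗ[k] M →ₗ[k] Module.End k M} (hD : ∀ x y, D y x = D x y)
    (h2 : (2 : k) ≠ 0) (hsq : ∀ x, D x x ∘ₗ D x x = 0) (x y : M) :
    D x x ∘ₗ D y y + D y y ∘ₗ D x x + (4 : k) • (D x y ∘ₗ D x y) = 0 := by
  have hpol := polarize_comp_self hD x y
  simp only [hsq, add_zero, zero_add] at hpol
  exact (smul_eq_zero_iff_right h2).mp hpol.symm

end LinearMap

namespace IsNullSTS

variable {k T : Type*} [Field k] [AddCommGroup T] [Module k T]
  {tp : T →ₗ[k] T →ₗ[k] T →ₗ[k] T}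

theorem tp_comm (h : IsNullSTS k tp) (x y : T) : tp y x = tp x y :=
  LinearMap.ext (h.1 y x)

theorem tp_tp_self_self_self_left_eq_zero (h : IsNullSTS k tp) (h2 : (2 : k) ≠ 0) (x w : T) :
    tp (tp x x x) x w = 0 := by
  have hder := h.2.2 x x x x w
  rw [h.1 x (tp x x x), right_eq_add, ← two_smul k] at hder
  exact (smul_eq_zero_iff_right h2).mp hder

theorem comp_self_eq_zero (h : IsNullSTS k tp) (h2 : (2 : k) ≠ 0) (h3 : (3 : k) ≠ 0)
    (x : T) : tp x x ∘ₗ tp x x = 0 := by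
  ext z
  have hder := h.2.2 x z x x x
  rw [h.2.1 x z (tp x x x), h.1 x (tp x x x), h.tp_tp_self_self_self_left_eq_zero h2,
    h.2.1 x z x, h.1 (tp x x z), h.2.1 x (tp x x z)] at hder
  rw [LinearMap.comp_apply, LinearMap.zero_apply, ← smul_eq_zero_iff_right h3, hder]
  module

end IsNullSTS

theorem nullSTS_dxx_squared_zero_general (k T : Type*) [Field k] [AddCommGroup T] [Module k T]
    (hchar2 : ringChar k ≠ 2) (hchar3 : ringChar k ≠ 3)
    (tp : T →ₗ[k] T →ₗ[k] T →ₗ[k] T) (hnsts : IsNullSTS k tp) :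
    (∀ x : T, tp x x ∘ₗ tp x x = 0) ∧
    (∀ x y : T, tp x x ∘ₗ tp y y + tp y y ∘ₗ tp x x + (4 : k) • (tp x y ∘ₗ tp x y) = 0) := by
  have h2 : (2 : k) ≠ 0 := Ring.two_ne_zero hchar2
  have h3 : (3 : k) ≠ 0 := by
    exact_mod_cast CharP.cast_ne_zero_of_ne_of_prime k Nat.prime_three hchar3
  have hsq := hnsts.comp_self_eq_zero h2 h3
  exact ⟨hsq, LinearMap.anticomm_add_four_smul_comp_self_eq_zero hnsts.tp_comm h2 hsq⟩

/-- In a null symplectic triple system over a field of characteristic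
`≠ 2, 3`, `d_{x,x}² = 0` for all `x`, and consequently
`d_{x,x} d_{y,y} + d_{y,y} d_{x,x} + 4 d_{x,y}² = 0` for all `x, y`. -/
theorem nullSTS_dxx_squared_zero (k T : Type*) [Field k] [AddCommGroup T] [Module k T]
    [FiniteDimensional k T] (hchar2 : ringChar k ≠ 2) (hchar3 : ringChar k ≠ 3)
    (tp : T →ₗ[k] T →ₗ[k] T →ₗ[k] T) (hnsts : IsNullSTS k tp) :
    (∀ x : T, tp x x ∘ₗ tp x x = 0) ∧
    (∀ x y : T, tp x x ∘ₗ tp y y + tp y y ∘ₗ tp x x + (4 : k) • (tp x y ∘ₗ tp x y) = 0) :=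
  nullSTS_dxx_squared_zero_general k T hchar2 hchar3 tp hnsts
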